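/- Assume n ≥ 3. Then the following operator identities hold on V: G_{1,n}∘G_{1,n−1} − q^{−1}·G_{1,n−1}∘G_{1,n} = 0 and G_{1,n}∘G_{2,n} − q^{−1}·G_{2,n}∘G_{1,n} = 0. That is, the images of the highest weight vectors s_{2ω_1+ω_{n−2}} = g_{1,n}⊗g_{1,n−1} − q^{−1}g_{1,n−1}⊗g_{1,n} and s_{ω_2+2ω_{n−1}} = g_{1,n}⊗g_{2,n} − q^{−1}g_{2,n}⊗g_{1,n} of g_q ⊗ g_q vanish on V^q_{μω_1}, so these elements lie in the quadratic part of the kernel ideal I_q(μ,α) of the braided representation of T(g_q) on V^q_{μω_1} (part of Proposition 6). -/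
import Mathlib


noncomputable section

/-- Index set for the basis `{|m_1, …, m_n⟩ : m_i ∈ ℕ, m_1 + ⋯ + m_n = μ}`. -/
abbrev VIdx (n μ : ℕ) := {m : Fin n → ℕ // ∑ i, m i = μ}

/-- The module `V = V^q_{μω_1}`: the free `K`-module with basis `VIdx n μ`. -/
abbrev VMod (n μ : ℕ) (K : Type*) [Field K] := VIdx n μ →₀ K

/-- The symmetric `q`-number `[a]_q = (q^a − q^{−a})/(q − q^{−1})`, `a ∈ ℤ`. -/
def qint {K : Type*} [Field K] (q : K) (a : ℤ) : K := (q ^ a - q ^ (-a)) / (q - q⁻¹)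

/-- `mval m i` is the coordinate `m_i` (1-based index `1 ≤ i ≤ n`). -/
def mval {n : ℕ} (m : Fin n → ℕ) (i : ℕ) : ℕ :=
  if h : i - 1 < n then m ⟨i - 1, h⟩ else 0

/-- Update the (1-based) `i`-th coordinate of `m` to `v`. -/
def mupd {n : ℕ} (m : Fin n → ℕ) (i v : ℕ) : Fin n → ℕ :=
  if h : i - 1 < n then Function.update m ⟨i - 1, h⟩ v else m

/-- Increase `m_i` by one. -/
def minc {n : ℕ} (m : Fin n → ℕ) (i : ℕ) : Fin n → ℕ := mupd m i (mval m i + 1)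

/-- Decrease `m_i` by one. -/
def mdec {n : ℕ} (m : Fin n → ℕ) (i : ℕ) : Fin n → ℕ := mupd m i (mval m i - 1)

/-- The basis vector `|m_1, …, m_n⟩` of `V` when `Σ m_i = μ`, and `0` otherwise. -/
def sngl (n μ : ℕ) (K : Type*) [Field K] (m : Fin n → ℕ) : VMod n μ K :=
  if h : ∑ i, m i = μ then Finsupp.single ⟨m, h⟩ 1 else 0

/-- The linear operator on `V` extending a map defined on basis vectors. -/
def vlift {n μ : ℕ} {K : Type*} [Field K] (f : VIdx n μ → VMod n μ K) :
    Module.End K (VMod n μ K) :=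
  Finsupp.lift (VMod n μ K) K (VIdx n μ) f

/-- The partial sum `m_a + m_{a+1} + ⋯ + m_b` (1-based indices), as an integer. -/
def psum {n : ℕ} (m : Fin n → ℕ) (a b : ℕ) : ℤ := ∑ k ∈ Finset.Icc a b, (mval m k : ℤ)

/-- The operator `G_{i,j}` on `V = V^q_{μω_1}` (`1 ≤ i ≠ j ≤ n`):
for `i < j`, `G_{i,j}|m⟩ = α q^{j+(m_1+⋯+m_i)−(m_j+⋯+m_n)} [m_j]_q |…, m_i+1, …, m_j−1, …⟩`;
for `i > j`, `G_{i,j}|m⟩ = α q^{j−1+(m_1+⋯+m_{j−1})−(m_{i+1}+⋯+m_n)} [m_j]_q |…, m_j−1, …, m_i+1, …⟩`. -/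
def Gop (n μ : ℕ) (K : Type*) [Field K] (q α : K) (i j : ℕ) : Module.End K (VMod n μ K) :=
  if i < j then
    vlift fun m =>
      (α * q ^ ((j : ℤ) + psum m.1 1 i - psum m.1 j n) * qint q (mval m.1 j : ℤ)) •
        sngl n μ K (minc (mdec m.1 j) i)
  else if j < i then
    vlift fun m =>
      (α * q ^ ((j : ℤ) - 1 + psum m.1 1 (j - 1) - psum m.1 (i + 1) n) *
          qint q (mval m.1 j : ℤ)) •
        sngl n μ K (minc (mdec m.1 j) i)
  else 0

/-- The diagonal operator `T_i` on `V = V^q_{μω_1}` (`1 ≤ i ≤ n−1`):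
`T_i|m⟩ = α q^{i+(m_1+⋯+m_{i−1})−(m_{i+2}+⋯+m_n)}
  ([2]_q q^{m_i−m_{i+1}} − q^{m_i+m_{i+1}+1} − q^{−m_i−m_{i+1}−1})/(q−q^{−1}) |m⟩`. -/
def Tq (n μ : ℕ) (K : Type*) [Field K] (q α : K) (i : ℕ) : Module.End K (VMod n μ K) :=
  vlift fun m =>
    (α * q ^ ((i : ℤ) + psum m.1 1 (i - 1) - psum m.1 (i + 2) n) *
        (((q + q⁻¹) * q ^ ((mval m.1 i : ℤ) - (mval m.1 (i + 1) : ℤ)) -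
            q ^ ((mval m.1 i : ℤ) + (mval m.1 (i + 1) : ℤ) + 1) -
            q ^ (-(mval m.1 i : ℤ) - (mval m.1 (i + 1) : ℤ) - 1)) / (q - q⁻¹))) •
      sngl n μ K m.1
section helpers
variable {n μ : ℕ} {K : Type*} [Field K]

lemma vlift_single (f : VIdx n μ → VMod n μ K) (m : VIdx n μ) :
    vlift f (Finsupp.single m 1) = f m := by
  simp [vlift]

lemma end_ext {A B : Module.End K (VMod n μ K)}
    (h : ∀ m : VIdx n μ, A (Finsupp.single m 1) = B (Finsupp.single m 1)) : A = B := by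
  apply Finsupp.lhom_ext
  intro a b
  have hb : (Finsupp.single a b : VMod n μ K) = b • Finsupp.single a 1 := by
    simp [Finsupp.smul_single]
  rw [hb, map_smul, map_smul, h]

lemma qint_zero {q : K} : qint q 0 = 0 := by simp [qint]

lemma mval_mupd_self (m : Fin n → ℕ) {i : ℕ} (v : ℕ) (hi1 : 1 ≤ i) (hin : i ≤ n) :
    mval (mupd m i v) i = v := by
  have h : i - 1 < n := by omega
  simp [mval, mupd, h]

lemma mval_mupd_ne (m : Fin n → ℕ) {i k : ℕ} (v : ℕ) (hi1 : 1 ≤ i) (hin : i ≤ n)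
    (hk1 : 1 ≤ k) (hik : i ≠ k) :
    mval (mupd m i v) k = mval m k := by
  have h : i - 1 < n := by omega
  simp only [mupd, dif_pos h, mval]
  split
  · rw [Function.update_apply, if_neg]
    simp only [Fin.mk.injEq]
    omega
  · rfl

lemma mupd_comm (m : Fin n → ℕ) {i j : ℕ} (v w : ℕ) (hi1 : 1 ≤ i) (hin : i ≤ n)
    (hj1 : 1 ≤ j) (hjn : j ≤ n) (hij : i ≠ j) :
    mupd (mupd m i v) j w = mupd (mupd m j w) i v := by
  have hi : i - 1 < n := by omega
  have hj : j - 1 < n := by omega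
  simp only [mupd, dif_pos hi, dif_pos hj]
  apply Function.update_comm
  simp only [ne_eq, Fin.mk.injEq]
  omega

lemma mupd_idem (m : Fin n → ℕ) {i : ℕ} (v w : ℕ) (hi1 : 1 ≤ i) (hin : i ≤ n) :
    mupd (mupd m i v) i w = mupd m i w := by
  have hi : i - 1 < n := by omega
  simp [mupd, dif_pos hi, Function.update_idem]

lemma sum_mupd (m : Fin n → ℕ) {i : ℕ} (v : ℕ) (hi1 : 1 ≤ i) (hin : i ≤ n) :
    ∑ x, mupd m i v x + mval m i = ∑ x, m x + v := by
  have h : i - 1 < n := by omega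
  simp only [mupd, dif_pos h, mval, dif_pos h]
  rw [Finset.sum_update_of_mem (Finset.mem_univ _), ← Finset.erase_eq]
  have := Finset.sum_erase_add Finset.univ m (Finset.mem_univ (⟨i - 1, h⟩ : Fin n))
  omega

lemma psum_self (m : Fin n → ℕ) (a : ℕ) : psum m a a = (mval m a : ℤ) := by
  simp [psum]

lemma psum_succ (m : Fin n → ℕ) {a b : ℕ} (h : a ≤ b + 1) :
    psum m a (b + 1) = psum m a b + (mval m (b + 1) : ℤ) := by
  simp [psum, Finset.sum_Icc_succ_top h]

end helpers
section helpers2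
variable {n μ : ℕ} {K : Type*} [Field K]

lemma minc_mdec_eq (m : Fin n → ℕ) {i j : ℕ} (hi1 : 1 ≤ i) (hin : i ≤ n)
    (hj1 : 1 ≤ j) (hjn : j ≤ n) (hij : i ≠ j) :
    minc (mdec m j) i = mupd (mupd m j (mval m j - 1)) i (mval m i + 1) := by
  simp only [minc, mdec]
  rw [mval_mupd_ne m _ hj1 hjn hi1 (fun h => hij h.symm)]

lemma sum_minc_mdec (m : Fin n → ℕ) {i j : ℕ} (hi1 : 1 ≤ i) (hin : i ≤ n)
    (hj1 : 1 ≤ j) (hjn : j ≤ n) (hij : i ≠ j) :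
    ∑ x, minc (mdec m j) i x + mval m j = ∑ x, m x + 1 + (mval m j - 1) := by
  rw [minc_mdec_eq m hi1 hin hj1 hjn hij]
  have h1 := sum_mupd (mupd m j (mval m j - 1)) (mval m i + 1) hi1 hin
  have h2 := sum_mupd m (mval m j - 1) hj1 hjn
  have h3 := mval_mupd_ne m (mval m j - 1) hj1 hjn hi1 (fun h => hij h.symm)
  omega

lemma sngl_of_ne (m : Fin n → ℕ) (h : ∑ x, m x ≠ μ) : sngl n μ K m = (0 : VMod n μ K) := by
  rw [sngl, dif_neg h]

lemma Gop_single {q α : K} {i j : ℕ} (hij : i < j) (m : VIdx n μ) :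
    Gop n μ K q α i j (Finsupp.single m 1) =
      (α * q ^ ((j : ℤ) + psum m.1 1 i - psum m.1 j n) * qint q (mval m.1 j : ℤ)) •
        sngl n μ K (minc (mdec m.1 j) i) := by
  rw [Gop, if_pos hij, vlift_single]

lemma Gop_sngl_of {q α : K} {i j : ℕ} (hij : i < j) (m : Fin n → ℕ) (h : ∑ x, m x = μ) :
    Gop n μ K q α i j (sngl n μ K m) =
      (α * q ^ ((j : ℤ) + psum m 1 i - psum m j n) * qint q (mval m j : ℤ)) •
        sngl n μ K (minc (mdec m j) i) := by
  rw [sngl, dif_pos h]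
  exact Gop_single hij ⟨m, h⟩

lemma qpow_shift {q : K} (hq : q ≠ 0) {A B : ℤ} (h : A + 1 = B) :
    q⁻¹ * q ^ B = q ^ A := by
  rw [← h, zpow_add_one₀ hq, mul_comm (q ^ A) q, ← mul_assoc, inv_mul_cancel₀ hq, one_mul]

lemma scalar_key {q α X Y Z W : K} (hq : q ≠ 0) {E1 E2 E3 E4 : ℤ}
    (h : E1 + E2 + 1 = E3 + E4) (hXY : X * Y = Z * W) :
    (α * q ^ E1 * X) * (α * q ^ E2 * Y) - q⁻¹ * ((α * q ^ E3 * Z) * (α * q ^ E4 * W)) = 0 := by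
  rw [sub_eq_zero]
  calc (α * q ^ E1 * X) * (α * q ^ E2 * Y)
      = (q ^ E1 * q ^ E2) * (α * α * (X * Y)) := by ring
    _ = q ^ (E1 + E2) * (α * α * (Z * W)) := by rw [← zpow_add₀ hq, hXY]
    _ = (q⁻¹ * q ^ (E3 + E4)) * (α * α * (Z * W)) := by rw [qpow_shift hq h]
    _ = q⁻¹ * ((q ^ E3 * q ^ E4) * (α * α * (Z * W))) := by rw [← zpow_add₀ hq]; ring
    _ = q⁻¹ * ((α * q ^ E3 * Z) * (α * q ^ E4 * W)) := by ring

end helpers2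
section helpers3
variable {n μ : ℕ} {K : Type*} [Field K]

lemma mval_minc_mdec (m : Fin n → ℕ) {i j r : ℕ} (hi1 : 1 ≤ i) (hin : i ≤ n)
    (hj1 : 1 ≤ j) (hjn : j ≤ n) (hij : i ≠ j) (hr1 : 1 ≤ r) (hri : i ≠ r) (hrj : j ≠ r) :
    mval (minc (mdec m j) i) r = mval m r := by
  rw [minc_mdec_eq m hi1 hin hj1 hjn hij,
      mval_mupd_ne _ _ hi1 hin hr1 hri, mval_mupd_ne _ _ hj1 hjn hr1 hrj]

lemma mval_minc_mdec_i (m : Fin n → ℕ) {i j : ℕ} (hi1 : 1 ≤ i) (hin : i ≤ n)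
    (hj1 : 1 ≤ j) (hjn : j ≤ n) (hij : i ≠ j) :
    mval (minc (mdec m j) i) i = mval m i + 1 := by
  rw [minc_mdec_eq m hi1 hin hj1 hjn hij, mval_mupd_self _ _ hi1 hin]

lemma mval_minc_mdec_j (m : Fin n → ℕ) {i j : ℕ} (hi1 : 1 ≤ i) (hin : i ≤ n)
    (hj1 : 1 ≤ j) (hjn : j ≤ n) (hij : i ≠ j) :
    mval (minc (mdec m j) i) j = mval m j - 1 := by
  rw [minc_mdec_eq m hi1 hin hj1 hjn hij, mval_mupd_ne _ _ hi1 hin hj1 hij,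
      mval_mupd_self _ _ hj1 hjn]

/-- `G_{i,j}` targets commute when the two raising indices coincide (`i = r`). -/
lemma swapA (m : Fin n → ℕ) {i j s : ℕ} (hi1 : 1 ≤ i) (hin : i ≤ n)
    (hj1 : 1 ≤ j) (hjn : j ≤ n) (hs1 : 1 ≤ s) (hsn : s ≤ n)
    (hij : i ≠ j) (his : i ≠ s) (hjs : j ≠ s) :
    minc (mdec (minc (mdec m j) i) s) i = minc (mdec (minc (mdec m s) i) j) i := by
  have L : ∀ (j s : ℕ), 1 ≤ j → j ≤ n → 1 ≤ s → s ≤ n → i ≠ j → i ≠ s → j ≠ s →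
      minc (mdec (minc (mdec m j) i) s) i
        = mupd (mupd (mupd m j (mval m j - 1)) s (mval m s - 1)) i (mval m i + 1 + 1) := by
    intro j s hj1 hjn hs1 hsn hij his hjs
    rw [minc_mdec_eq m hi1 hin hj1 hjn hij,
        minc_mdec_eq _ hi1 hin hs1 hsn his,
        mval_mupd_ne _ _ hi1 hin hs1 his, mval_mupd_ne _ _ hj1 hjn hs1 hjs,
        mval_mupd_self _ _ hi1 hin,
        mupd_comm _ _ _ hi1 hin hs1 hsn his,
        mupd_idem _ _ _ hi1 hin]
  rw [L j s hj1 hjn hs1 hsn hij his hjs, L s j hs1 hsn hj1 hjn his hij (Ne.symm hjs),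
      mupd_comm m _ _ hj1 hjn hs1 hsn hjs]

/-- `G_{i,j}` targets commute when the two lowering indices coincide (`j = s`). -/
lemma swapB (m : Fin n → ℕ) {i r j : ℕ} (hi1 : 1 ≤ i) (hin : i ≤ n)
    (hr1 : 1 ≤ r) (hrn : r ≤ n) (hj1 : 1 ≤ j) (hjn : j ≤ n)
    (hij : i ≠ j) (hrj : r ≠ j) (hir : i ≠ r) :
    minc (mdec (minc (mdec m j) i) j) r = minc (mdec (minc (mdec m j) r) j) i := by
  have L : ∀ (i r : ℕ), 1 ≤ i → i ≤ n → 1 ≤ r → r ≤ n → i ≠ j → r ≠ j → i ≠ r →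
      minc (mdec (minc (mdec m j) i) j) r
        = mupd (mupd (mupd m j (mval m j - 1 - 1)) i (mval m i + 1)) r (mval m r + 1) := by
    intro i r hi1 hin hr1 hrn hij hrj hir
    rw [minc_mdec_eq m hi1 hin hj1 hjn hij,
        minc_mdec_eq _ hr1 hrn hj1 hjn hrj,
        mval_mupd_ne _ _ hi1 hin hj1 hij, mval_mupd_self _ _ hj1 hjn,
        mval_mupd_ne _ _ hi1 hin hr1 hir, mval_mupd_ne _ _ hj1 hjn hr1 (Ne.symm hrj),
        mupd_comm _ _ _ hi1 hin hj1 hjn hij,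
        mupd_idem _ _ _ hj1 hjn]
  rw [L i r hi1 hin hr1 hrn hij hrj hir, L r i hr1 hrn hi1 hin hrj hij (Ne.symm hir),
      mupd_comm _ _ _ hi1 hin hr1 hrn hir]

lemma vec_key {V : Type*} [AddCommGroup V] [Module K V] {q α X Y Z W : K} (hq : q ≠ 0)
    {E1 E2 E3 E4 : ℤ} (h : E1 + E2 + 1 = E3 + E4) (hXY : X * Y = Z * W) (v w : V)
    (hvw : w = v) :
    (α * q ^ E1 * X) • ((α * q ^ E2 * Y) • v) -
      q⁻¹ • ((α * q ^ E3 * Z) • ((α * q ^ E4 * W) • w)) = 0 := by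
  subst hvw
  simp only [smul_smul]
  rw [← sub_smul, scalar_key hq h hXY, zero_smul]

end helpers3

/-- The images of the highest weight vectors
`s_{2ω_1+ω_{n−2}} = g_{1,n} ⊗ g_{1,n−1} − q^{−1} g_{1,n−1} ⊗ g_{1,n}` and
`s_{ω_2+2ω_{n−1}} = g_{1,n} ⊗ g_{2,n} − q^{−1} g_{2,n} ⊗ g_{1,n}` of `g_q ⊗ g_q`
vanish on `V^q_{μω_1}`: these elements lie in the quadratic part of the kernel
ideal `I_q(μ, α)` of the braided representation of `T(g_q)` on `V^q_{μω_1}`. -/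
theorem stmt_17 (n : ℕ) (hn : 3 ≤ n) (K : Type*) [Field K] (q : K) (hq0 : q ≠ 0)
    (hq1 : q ^ 2 ≠ 1) (μ : ℕ) (α : K) :
    Gop n μ K q α 1 n * Gop n μ K q α 1 (n - 1) -
        q⁻¹ • (Gop n μ K q α 1 (n - 1) * Gop n μ K q α 1 n) = 0 ∧
    Gop n μ K q α 1 n * Gop n μ K q α 2 n -
        q⁻¹ • (Gop n μ K q α 2 n * Gop n μ K q α 1 n) = 0 := by
  obtain ⟨k, rfl⟩ : ∃ k, n = k + 3 := ⟨n - 3, by omega⟩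
  have hn1 : k + 3 - 1 = k + 2 := rfl
  have hp1 : ∀ X : Fin (k + 3) → ℕ,
      psum X (k + 2) (k + 3) = (mval X (k + 2) : ℤ) + mval X (k + 3) := by
    intro X
    have h := psum_succ X (a := k + 2) (b := k + 2) (by omega)
    have e : k + 2 + 1 = k + 3 := by omega
    simp only [e] at h
    rw [h, psum_self]
  have hp2 : ∀ X : Fin (k + 3) → ℕ, psum X 1 2 = (mval X 1 : ℤ) + mval X 2 := by
    intro X
    have h := psum_succ X (a := 1) (b := 1) (by omega)
    have e : 1 + 1 = 2 := by omega
    simp only [e] at h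
    rw [h, psum_self]
  constructor
  · apply end_ext
    intro m
    have hm := m.2
    simp only [hn1, LinearMap.sub_apply, Module.End.mul_apply, LinearMap.smul_apply,
      LinearMap.zero_apply]
    rw [Gop_single (show (1 : ℕ) < k + 2 by omega) m,
        Gop_single (show (1 : ℕ) < k + 3 by omega) m, map_smul, map_smul]
    have hs1 := sum_minc_mdec m.1 (i := 1) (j := k + 2) (by omega) (by omega) (by omega)
      (by omega) (by omega)
    have hs2 := sum_minc_mdec m.1 (i := 1) (j := k + 3) (by omega) (by omega) (by omega)
      (by omega) (by omega)
    rcases Nat.eq_zero_or_pos (mval m.1 (k + 2)) with hb | hb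
    · have hz1 : sngl (k + 3) μ K (minc (mdec m.1 (k + 2)) 1) = 0 := sngl_of_ne _ (by omega)
      rw [hz1, map_zero, smul_zero, zero_sub, neg_eq_zero]
      rcases Nat.eq_zero_or_pos (mval m.1 (k + 3)) with hc | hc
      · have hz2 : sngl (k + 3) μ K (minc (mdec m.1 (k + 3)) 1) = 0 := sngl_of_ne _ (by omega)
        rw [hz2, map_zero, smul_zero, smul_zero]
      · have hsum2 : ∑ x, minc (mdec m.1 (k + 3)) 1 x = μ := by omega
        rw [Gop_sngl_of (show (1 : ℕ) < k + 2 by omega) _ hsum2]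
        have hB2 : mval (minc (mdec m.1 (k + 3)) 1) (k + 2) = mval m.1 (k + 2) :=
          mval_minc_mdec m.1 (i := 1) (j := k + 3) (r := k + 2) (by omega) (by omega)
            (by omega) (by omega) (by omega) (by omega) (by omega) (by omega)
        rw [hB2, hb]
        simp [qint_zero]
    · rcases Nat.eq_zero_or_pos (mval m.1 (k + 3)) with hc | hc
      · have hz2 : sngl (k + 3) μ K (minc (mdec m.1 (k + 3)) 1) = 0 := sngl_of_ne _ (by omega)
        rw [hz2, map_zero, smul_zero, smul_zero, sub_zero]
        have hsum1 : ∑ x, minc (mdec m.1 (k + 2)) 1 x = μ := by omega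
        rw [Gop_sngl_of (show (1 : ℕ) < k + 3 by omega) _ hsum1]
        have hA2 : mval (minc (mdec m.1 (k + 2)) 1) (k + 3) = mval m.1 (k + 3) :=
          mval_minc_mdec m.1 (i := 1) (j := k + 2) (r := k + 3) (by omega) (by omega)
            (by omega) (by omega) (by omega) (by omega) (by omega) (by omega)
        rw [hA2, hc]
        simp [qint_zero]
      · have hsum1 : ∑ x, minc (mdec m.1 (k + 2)) 1 x = μ := by omega
        have hsum2 : ∑ x, minc (mdec m.1 (k + 3)) 1 x = μ := by omega
        rw [Gop_sngl_of (show (1 : ℕ) < k + 3 by omega) _ hsum1,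
            Gop_sngl_of (show (1 : ℕ) < k + 2 by omega) _ hsum2]
        have hA1 : mval (minc (mdec m.1 (k + 2)) 1) 1 = mval m.1 1 + 1 :=
          mval_minc_mdec_i m.1 (by omega) (by omega) (by omega) (by omega) (by omega)
        have hA2 : mval (minc (mdec m.1 (k + 2)) 1) (k + 3) = mval m.1 (k + 3) :=
          mval_minc_mdec m.1 (i := 1) (j := k + 2) (r := k + 3) (by omega) (by omega)
            (by omega) (by omega) (by omega) (by omega) (by omega) (by omega)
        have hB1 : mval (minc (mdec m.1 (k + 3)) 1) 1 = mval m.1 1 + 1 :=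
          mval_minc_mdec_i m.1 (by omega) (by omega) (by omega) (by omega) (by omega)
        have hB2 : mval (minc (mdec m.1 (k + 3)) 1) (k + 2) = mval m.1 (k + 2) :=
          mval_minc_mdec m.1 (i := 1) (j := k + 3) (r := k + 2) (by omega) (by omega)
            (by omega) (by omega) (by omega) (by omega) (by omega) (by omega)
        have hB3 : mval (minc (mdec m.1 (k + 3)) 1) (k + 3) = mval m.1 (k + 3) - 1 :=
          mval_minc_mdec_j m.1 (by omega) (by omega) (by omega) (by omega) (by omega)
        refine vec_key hq0 ?_ ?_ _ _ ?_
        · simp only [psum_self, hp1, hA1, hA2, hB1, hB2, hB3]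
          omega
        · rw [hA2, hB2]; ring
        · exact congrArg (sngl (k + 3) μ K)
            (swapA m.1 (by omega) (by omega) (by omega) (by omega) (by omega) (by omega)
              (by omega) (by omega) (by omega))
  · apply end_ext
    intro m
    have hm := m.2
    simp only [LinearMap.sub_apply, Module.End.mul_apply, LinearMap.smul_apply,
      LinearMap.zero_apply]
    rw [Gop_single (show (2 : ℕ) < k + 3 by omega) m,
        Gop_single (show (1 : ℕ) < k + 3 by omega) m, map_smul, map_smul]
    have hs1 := sum_minc_mdec m.1 (i := 2) (j := k + 3) (by omega) (by omega) (by omega)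
      (by omega) (by omega)
    have hs2 := sum_minc_mdec m.1 (i := 1) (j := k + 3) (by omega) (by omega) (by omega)
      (by omega) (by omega)
    rcases Nat.eq_zero_or_pos (mval m.1 (k + 3)) with hc | hc
    · have hz1 : sngl (k + 3) μ K (minc (mdec m.1 (k + 3)) 2) = 0 := sngl_of_ne _ (by omega)
      have hz2 : sngl (k + 3) μ K (minc (mdec m.1 (k + 3)) 1) = 0 := sngl_of_ne _ (by omega)
      rw [hz1, hz2, map_zero, map_zero, smul_zero, smul_zero, smul_zero, sub_zero]
    · have hsum1 : ∑ x, minc (mdec m.1 (k + 3)) 2 x = μ := by omega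
      have hsum2 : ∑ x, minc (mdec m.1 (k + 3)) 1 x = μ := by omega
      rw [Gop_sngl_of (show (1 : ℕ) < k + 3 by omega) _ hsum1,
          Gop_sngl_of (show (2 : ℕ) < k + 3 by omega) _ hsum2]
      have hA1 : mval (minc (mdec m.1 (k + 3)) 2) 1 = mval m.1 1 :=
        mval_minc_mdec m.1 (i := 2) (j := k + 3) (r := 1) (by omega) (by omega)
          (by omega) (by omega) (by omega) (by omega) (by omega) (by omega)
      have hA2 : mval (minc (mdec m.1 (k + 3)) 2) (k + 3) = mval m.1 (k + 3) - 1 :=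
        mval_minc_mdec_j m.1 (by omega) (by omega) (by omega) (by omega) (by omega)
      have hB1 : mval (minc (mdec m.1 (k + 3)) 1) 1 = mval m.1 1 + 1 :=
        mval_minc_mdec_i m.1 (by omega) (by omega) (by omega) (by omega) (by omega)
      have hB2 : mval (minc (mdec m.1 (k + 3)) 1) 2 = mval m.1 2 :=
        mval_minc_mdec m.1 (i := 1) (j := k + 3) (r := 2) (by omega) (by omega)
          (by omega) (by omega) (by omega) (by omega) (by omega) (by omega)
      have hB3 : mval (minc (mdec m.1 (k + 3)) 1) (k + 3) = mval m.1 (k + 3) - 1 :=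
        mval_minc_mdec_j m.1 (by omega) (by omega) (by omega) (by omega) (by omega)
      refine vec_key hq0 ?_ ?_ _ _ ?_
      · simp only [psum_self, hp2, hA1, hA2, hB1, hB2, hB3]
        omega
      · rw [hA2, hB3]
      · exact congrArg (sngl (k + 3) μ K)
          (swapB m.1 (by omega) (by omega) (by omega) (by omega) (by omega) (by omega)
            (by omega) (by omega) (by omega))
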